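/- arXiv:math/0505437 — 2 statements merged into one kernel-verified Lean document; each statement's English description precedes it below -/
import Mathlib

section
/- For every integer p ≥ 1, the Bernoulli number B_{2p} satisfies B_{2p} = -2p + ((-1)^p (2p)!/2^{2p}) · Σ_{l=0}^{p} (-1)^l 3^{2l} D_{p-l}/(2l)!. -/
/-- `D 0 = 1` and, for `k ≥ 1`, `D k` is the determinant of the `k × k` rational matrix
whose `(i, j)` entry is `1/(2(j-i)+3)!` when `j ≥ i`, `1` when `j = i - 1`,
and `0` when `j < i - 1`. -/
def D : ℕ → ℚ
  | 0 => 1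
  | k + 1 =>
    Matrix.det (fun i j : Fin (k + 1) =>
      if (i : ℕ) ≤ (j : ℕ) then 1 / ((2 * ((j : ℕ) - (i : ℕ)) + 3).factorial : ℚ)
      else if (j : ℕ) + 1 = (i : ℕ) then 1 else 0)

/-!
Let `a(y) = sinh √y / √y = ∑ yⁿ / (2n+1)!`. The matrix defining `D k` is the Hessenberg–Toeplitz
matrix of the coefficients of `a`. For any power series `f` with `f(0) = 1` this determinant is
`(-1)ᵏ` times the `k`-th coefficient of `1 / f`: up to sign it is the cofactor at `(k, 0)` of the
unitriangular Toeplitz matrix of `f`, whose inverse is the Toeplitz matrix of `1 / f`.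
Since `1 / a(x²) = x / sinh x = 2 B(x) - B(2x)` with `B(x) = x / (eˣ - 1)`, this gives
`D k = (-1)ᵏ (2 - 4ᵏ) B_{2k} / (2k)!`. The sum in the theorem is then `(-1)ᵖ` times the
coefficient of `x^{2p}` in `cosh 3x · x / sinh x = B(2x) + x + 2x sinh 2x`, which is
`4ᵖ (B_{2p} + 2p) / (2p)!`.
-/

open Nat

namespace PowerSeries

section Semiring

variable {R : Type*} [Semiring R]

theorem ext_even_odd {f g : R⟦X⟧} (heven : ∀ n, coeff (2 * n) f = coeff (2 * n) g)
    (hodd : ∀ n, coeff (2 * n + 1) f = coeff (2 * n + 1) g) : f = g := by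
  ext m
  obtain ⟨n, rfl | rfl⟩ := Nat.even_or_odd' m
  exacts [heven n, hodd n]

theorem coeff_two_mul (f : R⟦X⟧) (n : ℕ) : coeff n (2 * f) = 2 * coeff n f := by
  rw [← map_ofNat C 2, coeff_C_mul]

end Semiring

section CommRing

variable {R : Type*} [CommRing R]

noncomputable def lowerToeplitz (f : R⟦X⟧) (n : ℕ) : Matrix (Fin n) (Fin n) R :=
  Matrix.of fun i j => if (j : ℕ) ≤ i then coeff ((i : ℕ) - j) f else 0

noncomputable def hessenbergToeplitz (f : R⟦X⟧) (n : ℕ) : Matrix (Fin n) (Fin n) R :=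
  Matrix.of fun i j => if (i : ℕ) ≤ j + 1 then coeff ((j : ℕ) + 1 - i) f else 0

theorem lowerToeplitz_mul (f g : R⟦X⟧) (n : ℕ) :
    lowerToeplitz f n * lowerToeplitz g n = lowerToeplitz (f * g) n := by
  ext i j
  have := i.isLt
  simp only [lowerToeplitz, Matrix.mul_apply, Matrix.of_apply]
  rw [Fin.sum_univ_eq_sum_range (fun t => (if t ≤ (i : ℕ) then coeff (i - t) f else 0) *
    (if (j : ℕ) ≤ t then coeff (t - j) g else 0)) n]
  split_ifs with hji
  · have hsub : Finset.Ico (j : ℕ) (i + 1) ⊆ Finset.range n := by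
      intro t ht; simp only [Finset.mem_Ico, Finset.mem_range] at ht ⊢; omega
    rw [← Finset.sum_subset hsub fun t _ ht => ?_, Finset.sum_Ico_eq_sum_range, mul_comm f,
      coeff_mul, Finset.Nat.sum_antidiagonal_eq_sum_range_succ (fun u v => coeff u g * coeff v f)]
    · refine Finset.sum_congr (by congr 1; omega) fun s hs => ?_
      rw [Finset.mem_range] at hs
      rw [if_pos (by omega), if_pos (by omega), mul_comm, Nat.add_sub_cancel_left, Nat.sub_sub]
    · rw [Finset.mem_Ico] at ht
      split_ifs <;> first | simp | omega
  · exact Finset.sum_eq_zero fun t _ => by split_ifs <;> first | simp | omega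

theorem lowerToeplitz_one (n : ℕ) : lowerToeplitz (1 : R⟦X⟧) n = 1 := by
  ext i j
  simp only [lowerToeplitz, Matrix.of_apply, coeff_one, Matrix.one_apply, Fin.ext_iff]
  split_ifs <;> first | rfl | omega

theorem det_lowerToeplitz (f : R⟦X⟧) (n : ℕ) :
    (lowerToeplitz f n).det = constantCoeff f ^ n := by
  rw [Matrix.det_of_isLowerTriangular (lowerToeplitz f n) fun i j hij => if_neg (not_le.mpr hij)]
  simp [lowerToeplitz]

theorem det_hessenbergToeplitz {f g : R⟦X⟧} (hf : constantCoeff f = 1) (hfg : f * g = 1)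
    (k : ℕ) : (hessenbergToeplitz f k).det = (-1) ^ k * coeff k g := by
  set L := lowerToeplitz f (k + 1)
  have hadj : L.adjugate = lowerToeplitz g (k + 1) :=
    calc L.adjugate = L.adjugate * (L * lowerToeplitz g (k + 1)) := by
          rw [lowerToeplitz_mul, hfg, lowerToeplitz_one, Matrix.mul_one]
      _ = lowerToeplitz g (k + 1) := by
          rw [← Matrix.mul_assoc, Matrix.adjugate_mul, det_lowerToeplitz, hf, one_pow, one_smul,
            Matrix.one_mul]
  have hminor : (hessenbergToeplitz f k).det = (L.submatrix Fin.succ Fin.castSucc).det := by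
    rw [← Matrix.det_transpose]
    rfl
  have hentry : (-1) ^ k * (L.submatrix Fin.succ Fin.castSucc).det = coeff k g := by
    simpa [Matrix.adjugate_fin_succ_eq_det_submatrix, lowerToeplitz] using
      congr_fun₂ hadj (Fin.last k) 0
  rw [hminor, ← hentry, ← mul_assoc, ← mul_pow, neg_one_mul, neg_neg, one_pow, one_mul]

theorem expand_injective (p : ℕ) (hp : p ≠ 0) :
    Function.Injective (expand p hp : R⟦X⟧ → R⟦X⟧) := fun f g h => by
  ext n
  rw [← coeff_expand_mul p hp f, h, coeff_expand_mul]

@[simp]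
theorem coeff_expand_two_odd (f : R⟦X⟧) (n : ℕ) :
    coeff (2 * n + 1) (expand 2 two_ne_zero f) = 0 :=
  coeff_expand_of_not_dvd _ _ _ (by omega)

@[simp]
theorem coeff_X_mul_expand_two_even (f : R⟦X⟧) (n : ℕ) :
    coeff (2 * n) (X * expand 2 two_ne_zero f) = 0 := by
  cases n with
  | zero => simp
  | succ n => rw [show 2 * (n + 1) = 2 * n + 1 + 1 by ring, coeff_succ_X_mul, coeff_expand_two_odd]

@[simp]
theorem coeff_X_mul_expand_two_odd (f : R⟦X⟧) (n : ℕ) :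
    coeff (2 * n + 1) (X * expand 2 two_ne_zero f) = coeff n f := by
  rw [coeff_succ_X_mul, coeff_expand_mul]

end CommRing

instance {R : Type*} [CommSemiring R] [CharZero R] : CharZero R⟦X⟧ :=
  charZero_of_injective_algebraMap (R := R) C_injective

theorem rescale_neg_one_exp_pow (k : ℕ) :
    rescale (-1) (exp ℚ) ^ k = rescale (-k : ℚ) (exp ℚ) := by
  rw [← map_pow, exp_pow_eq_rescale_exp, rescale_rescale, mul_neg_one]

theorem coeff_rescale_exp (a : ℚ) (n : ℕ) : coeff n (rescale a (exp ℚ)) = a ^ n / n ! := by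
  simp [coeff_exp, div_eq_mul_inv]

theorem exp_mul_rescale_neg_one_exp : exp ℚ * rescale (-1) (exp ℚ) = 1 := by
  simpa using exp_mul_exp_eq_exp_add (1 : ℚ) (-1)

theorem rescale_two_bernoulliPowerSeries_mul :
    rescale 2 (bernoulliPowerSeries ℚ) * (exp ℚ ^ 2 - 1) = 2 * X := by
  have h := congrArg (rescale (2 : ℚ)) (bernoulliPowerSeries_mul_exp_sub_one ℚ)
  rwa [map_mul, map_sub, map_one, rescale_X, map_ofNat, ← Nat.cast_ofNat,
    ← exp_pow_eq_rescale_exp] at h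

theorem bernoulli_sub_rescale_mul_exp_sub :
    (2 * bernoulliPowerSeries ℚ - rescale 2 (bernoulliPowerSeries ℚ)) *
      (exp ℚ - rescale (-1) (exp ℚ)) = 2 * X := by
  set B := bernoulliPowerSeries ℚ
  set F := rescale (-1) (exp ℚ)
  set W := 2 * B - rescale 2 B
  linear_combination 2 * F * (exp ℚ + 1) * bernoulliPowerSeries_mul_exp_sub_one ℚ -
    F * rescale_two_bernoulliPowerSeries_mul +
    (2 * X - F * W - W * (exp ℚ - F)) * exp_mul_rescale_neg_one_exp

theorem rescale_exp_add_mul_bernoulli_sub :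
    (rescale 3 (exp ℚ) + rescale (-3) (exp ℚ)) *
      (2 * bernoulliPowerSeries ℚ - rescale 2 (bernoulliPowerSeries ℚ)) =
      2 * (rescale 2 (bernoulliPowerSeries ℚ) + X +
        X * (rescale 2 (exp ℚ) - rescale (-2) (exp ℚ))) := by
  have h2 : rescale 2 (exp ℚ) = exp ℚ ^ 2 := by exact_mod_cast (exp_pow_eq_rescale_exp 2).symm
  have h3 : rescale 3 (exp ℚ) = exp ℚ ^ 3 := by exact_mod_cast (exp_pow_eq_rescale_exp 3).symm
  have h2' : rescale (-2) (exp ℚ) = rescale (-1) (exp ℚ) ^ 2 := by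
    exact_mod_cast (rescale_neg_one_exp_pow 2).symm
  have h3' : rescale (-3) (exp ℚ) = rescale (-1) (exp ℚ) ^ 3 := by
    exact_mod_cast (rescale_neg_one_exp_pow 3).symm
  have hne : exp ℚ ^ 2 - 1 ≠ 0 := fun h => by
    have := rescale_two_bernoulliPowerSeries_mul
    rw [h, mul_zero] at this
    exact mul_ne_zero two_ne_zero X_ne_zero this.symm
  rw [h2, h3, h2', h3']
  refine mul_right_cancel₀ hne ?_
  set E := exp ℚ
  set F := rescale (-1) (exp ℚ)
  linear_combination 2 * (E ^ 3 + F ^ 3) * (E + 1) * bernoulliPowerSeries_mul_exp_sub_one ℚ -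
    (E ^ 3 + F ^ 3 + 2) * rescale_two_bernoulliPowerSeries_mul +
    2 * X * (F ^ 2 + E * F + 1) * exp_mul_rescale_neg_one_exp

end PowerSeries

open PowerSeries

/-! Series in `y = x²`: `expand 2` turns them into `sinh x / x`, `x / sinh x` and `cosh 3x`. -/

noncomputable def sinhSqrtDivSqrt : ℚ⟦X⟧ := mk fun n => 1 / (2 * n + 1)!

noncomputable def sqrtDivSinhSqrt : ℚ⟦X⟧ :=
  mk fun n => (2 - 4 ^ n) * bernoulli (2 * n) / (2 * n)!

noncomputable def coshThreeSqrt : ℚ⟦X⟧ := mk fun n => 9 ^ n / (2 * n)!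

theorem two_mul_X_mul_expand_sinhSqrtDivSqrt :
    2 * (X * expand 2 two_ne_zero sinhSqrtDivSqrt) = exp ℚ - rescale (-1) (exp ℚ) := by
  refine ext_even_odd (fun n => ?_) (fun n => ?_) <;>
    simp [coeff_two_mul, sinhSqrtDivSqrt, coeff_exp, pow_mul, pow_succ]
  ring

theorem expand_sqrtDivSinhSqrt :
    expand 2 two_ne_zero sqrtDivSinhSqrt =
      2 * bernoulliPowerSeries ℚ - rescale 2 (bernoulliPowerSeries ℚ) := by
  refine ext_even_odd (fun n => ?_) (fun n => ?_)
  · simp [coeff_two_mul, sqrtDivSinhSqrt, bernoulliPowerSeries, pow_mul]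
    ring
  · rw [coeff_expand_two_odd]
    rcases n with _ | n
    · simp [coeff_two_mul, bernoulliPowerSeries]
    · simp [coeff_two_mul, bernoulliPowerSeries,
        bernoulli_eq_zero_of_odd (odd_two_mul_add_one (n + 1)) (by omega)]

theorem two_mul_expand_coshThreeSqrt :
    2 * expand 2 two_ne_zero coshThreeSqrt = rescale 3 (exp ℚ) + rescale (-3) (exp ℚ) := by
  refine ext_even_odd (fun n => ?_) (fun n => ?_) <;>
    simp [coeff_two_mul, coshThreeSqrt, pow_mul, pow_succ]
  ring

theorem expand_mk_bernoulli_add :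
    expand 2 two_ne_zero (mk fun n => 4 ^ n * (bernoulli (2 * n) + 2 * n) / (2 * n)!) =
      rescale 2 (bernoulliPowerSeries ℚ) + X + X * (rescale 2 (exp ℚ) - rescale (-2) (exp ℚ)) := by
  refine ext_even_odd (fun n => ?_) (fun n => ?_)
  · rcases n with _ | n
    · simp [bernoulliPowerSeries, rescale_mk]
    · rw [coeff_expand_mul, coeff_mk, show 2 * (n + 1) = 2 * n + 1 + 1 by ring, map_add, map_add,
        coeff_succ_X_mul, map_sub, coeff_rescale_exp, coeff_rescale_exp,
        (odd_two_mul_add_one n).neg_pow, coeff_rescale, coeff_X, if_neg (by omega)]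
      simp [bernoulliPowerSeries, Nat.factorial_succ, pow_succ, pow_mul]
      field_simp
      ring
  · rw [coeff_expand_two_odd, map_add, map_add, coeff_succ_X_mul, map_sub, coeff_rescale_exp,
      coeff_rescale_exp, (even_two_mul n).neg_pow, sub_self, add_zero, coeff_rescale, coeff_X]
    rcases n with _ | n
    · norm_num [bernoulliPowerSeries]
    · simp [bernoulliPowerSeries,
        bernoulli_eq_zero_of_odd (odd_two_mul_add_one (n + 1)) (by omega)]

theorem sinhSqrtDivSqrt_mul_sqrtDivSinhSqrt : sinhSqrtDivSqrt * sqrtDivSinhSqrt = 1 := by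
  apply expand_injective 2 two_ne_zero
  refine mul_left_cancel₀ (mul_ne_zero two_ne_zero X_ne_zero : (2 * X : ℚ⟦X⟧) ≠ 0) ?_
  rw [map_mul, map_one, mul_one, expand_sqrtDivSinhSqrt]
  linear_combination (2 * bernoulliPowerSeries ℚ - rescale 2 (bernoulliPowerSeries ℚ)) *
    two_mul_X_mul_expand_sinhSqrtDivSqrt + bernoulli_sub_rescale_mul_exp_sub

theorem coshThreeSqrt_mul_sqrtDivSinhSqrt :
    coshThreeSqrt * sqrtDivSinhSqrt =
      mk fun n => 4 ^ n * (bernoulli (2 * n) + 2 * n) / (2 * n)! := by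
  apply expand_injective 2 two_ne_zero
  refine mul_left_cancel₀ (two_ne_zero : (2 : ℚ⟦X⟧) ≠ 0) ?_
  rw [map_mul, ← mul_assoc, two_mul_expand_coshThreeSqrt, expand_sqrtDivSinhSqrt,
    expand_mk_bernoulli_add, rescale_exp_add_mul_bernoulli_sub]

theorem D_eq_det_hessenbergToeplitz (k : ℕ) :
    D k = (hessenbergToeplitz sinhSqrtDivSqrt k).det := by
  rcases k with _ | k
  · simp [D]
  · rw [D]
    congr 1
    ext i j
    simp only [hessenbergToeplitz, sinhSqrtDivSqrt, Matrix.of_apply, coeff_mk]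
    by_cases hij : (i : ℕ) ≤ j
    · rw [if_pos hij, if_pos (by omega),
        show 2 * ((j : ℕ) + 1 - i) + 1 = 2 * (j - i) + 3 by omega]
    by_cases hsucc : (j : ℕ) + 1 = i
    · rw [if_neg hij, if_pos hsucc, if_pos (by omega), ← hsucc, Nat.sub_self]
      norm_num
    · rw [if_neg hij, if_neg hsucc, if_neg (by omega)]

theorem D_eq (k : ℕ) : D k = (-1) ^ k * ((2 - 4 ^ k) * bernoulli (2 * k) / (2 * k)!) := by
  rw [D_eq_det_hessenbergToeplitz, det_hessenbergToeplitz (by simp [sinhSqrtDivSqrt])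
    sinhSqrtDivSqrt_mul_sqrtDivSinhSqrt, sqrtDivSinhSqrt, coeff_mk]

theorem sum_neg_one_pow_mul_D (p : ℕ) :
    ∑ l ∈ Finset.range (p + 1), (-1 : ℚ) ^ l * 3 ^ (2 * l) * D (p - l) / (2 * l)! =
      (-1) ^ p * (4 ^ p * (bernoulli (2 * p) + 2 * p) / (2 * p)!) := by
  have h := congrArg (coeff p) coshThreeSqrt_mul_sqrtDivSinhSqrt
  rw [coeff_mul, Finset.Nat.sum_antidiagonal_eq_sum_range_succ_mk, coeff_mk] at h
  rw [← h, Finset.mul_sum]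
  refine Finset.sum_congr rfl fun l hl => ?_
  have hsign : (-1 : ℚ) ^ l * (-1) ^ (p - l) = (-1) ^ p := by
    rw [← pow_add, Nat.add_sub_cancel' (Finset.mem_range_succ_iff.mp hl)]
  rw [D_eq, coshThreeSqrt, sqrtDivSinhSqrt, coeff_mk, coeff_mk, pow_mul, ← hsign]
  ring

theorem bernoulli_even_eq_det_sum'_general (p : ℕ) :
    bernoulli (2 * p) =
      -(2 * (p : ℚ)) + ((-1 : ℚ) ^ p * ((2 * p).factorial : ℚ) / 2 ^ (2 * p)) *
        ∑ l ∈ Finset.range (p + 1),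
          (-1 : ℚ) ^ l * 3 ^ (2 * l) * D (p - l) / ((2 * l).factorial : ℚ) := by
  have hsq : (-1 : ℚ) ^ p * (-1) ^ p = 1 := by rw [← pow_add, Even.neg_one_pow ⟨p, rfl⟩]
  rw [sum_neg_one_pow_mul_D, pow_mul]
  field_simp
  linear_combination -(4 ^ p * (bernoulli (2 * p) + 2 * p)) * hsq

theorem bernoulli_even_eq_det_sum' (p : ℕ) (hp : 1 ≤ p) :
    bernoulli (2 * p) =
      -(2 * (p : ℚ)) + ((-1 : ℚ) ^ p * ((2 * p).factorial : ℚ) / 2 ^ (2 * p)) *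
        ∑ l ∈ Finset.range (p + 1),
          (-1 : ℚ) ^ l * 3 ^ (2 * l) * D (p - l) / ((2 * l).factorial : ℚ) :=
  bernoulli_even_eq_det_sum'_general p
end

section
/- For every integer p ≥ 1, D_p = (2/π^{2p}) · Σ_{k=1}^{∞} (-1)^{k+1}/k^{2p}, where the series on the right converges. -/
open Finset PowerSeries Nat

section Hessenberg

variable {R : Type*} [CommRing R]

def hessenberg (c : ℕ → R) (n : ℕ) : Matrix (Fin n) (Fin n) R :=
  Matrix.of fun i j => if (i : ℕ) ≤ j then c (j - i) else if (j : ℕ) + 1 = i then 1 else 0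

def hessenbergWithFirstRow (r c : ℕ → R) (n : ℕ) : Matrix (Fin n) (Fin n) R :=
  Matrix.of fun i j =>
    if (i : ℕ) = 0 then r j else if (i : ℕ) ≤ j then c (j - i) else if (j : ℕ) + 1 = i then 1 else 0

theorem hessenbergWithFirstRow_self (c : ℕ → R) (n : ℕ) :
    hessenbergWithFirstRow c c n = hessenberg c n := by
  ext i j
  simp only [hessenbergWithFirstRow, hessenberg, Matrix.of_apply]
  split_ifs <;> first | rfl | (congr 1; omega)

theorem det_hessenbergWithFirstRow_succ_succ (r c : ℕ → R) (n : ℕ) :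
    (hessenbergWithFirstRow r c (n + 2)).det =
      r 0 * (hessenberg c (n + 1)).det -
        (hessenbergWithFirstRow (fun j => r (j + 1)) c (n + 1)).det := by
  rw [Matrix.det_succ_column_zero, Fin.sum_univ_succ, Fin.sum_univ_succ,
    Finset.sum_eq_zero fun i _ => by simp [hessenbergWithFirstRow], add_zero]
  have minor_zero : (hessenbergWithFirstRow r c (n + 2)).submatrix (Fin.succAbove 0) Fin.succ =
      hessenberg c (n + 1) := by
    rw [← hessenbergWithFirstRow_self]
    ext i j
    simp only [Matrix.submatrix_apply, Fin.succAbove_zero, hessenbergWithFirstRow, Matrix.of_apply,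
      Fin.val_succ]
    split_ifs <;> first | rfl | contradiction | omega | (congr 1; omega)
  have minor_one : (hessenbergWithFirstRow r c (n + 2)).submatrix (Fin.succ 0).succAbove Fin.succ =
      hessenbergWithFirstRow (fun j => r (j + 1)) c (n + 1) := by
    ext i j
    rcases Fin.eq_zero_or_eq_succ i with rfl | ⟨i, rfl⟩
    · simp [hessenbergWithFirstRow]
    · simp only [Matrix.submatrix_apply, hessenbergWithFirstRow, Matrix.of_apply,
        Fin.succ_succAbove_succ, Fin.succAbove_zero, Fin.val_succ]
      split_ifs <;> first | rfl | contradiction | omega | (congr 1; omega)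
  have entry_zero : hessenbergWithFirstRow r c (n + 2) 0 0 = r 0 := by simp [hessenbergWithFirstRow]
  have entry_one : hessenbergWithFirstRow r c (n + 2) (Fin.succ 0) 0 = 1 := by
    simp [hessenbergWithFirstRow]
  rw [minor_zero, minor_one, entry_zero, entry_one]
  simp only [Fin.val_succ, Fin.val_zero]
  ring

theorem det_hessenbergWithFirstRow_succ (r c : ℕ → R) (n : ℕ) :
    (hessenbergWithFirstRow r c (n + 1)).det =
      ∑ j ∈ range (n + 1), (-1) ^ j * r j * (hessenberg c (n - j)).det := by
  induction n generalizing r with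
  | zero => simp [hessenbergWithFirstRow, hessenberg]
  | succ n ih =>
    rw [det_hessenbergWithFirstRow_succ_succ, ih, sum_range_succ' _ (n + 1)]
    have shift : ∀ j ∈ range (n + 1),
        (-1) ^ (j + 1) * r (j + 1) * (hessenberg c (n + 1 - (j + 1))).det =
          -((-1) ^ j * r (j + 1) * (hessenberg c (n - j)).det) := fun j _ => by
      rw [Nat.add_sub_add_right, pow_succ]; ring
    rw [sum_congr rfl shift, sum_neg_distrib, pow_zero, one_mul, Nat.sub_zero]
    ring

theorem det_hessenberg_succ (c : ℕ → R) (n : ℕ) :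
    (hessenberg c (n + 1)).det =
      ∑ j ∈ range (n + 1), (-1) ^ j * c j * (hessenberg c (n - j)).det := by
  rw [← hessenbergWithFirstRow_self, det_hessenbergWithFirstRow_succ]

theorem one_sub_X_mul_mul_mk_det_hessenberg (c : ℕ → R) :
    (1 - X * PowerSeries.mk fun j => (-1) ^ j * c j) *
      PowerSeries.mk (fun n => (hessenberg c n).det) = 1 := by
  ext n
  rcases n with _ | n
  · simp [hessenberg]
  · rw [sub_mul, one_mul, map_sub, mul_assoc, coeff_succ_X_mul, coeff_mul,
      Nat.sum_antidiagonal_eq_sum_range_succ_mk, coeff_mk, det_hessenberg_succ]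
    simp [coeff_one]

end Hessenberg

theorem D_eq_det_hessenberg (n : ℕ) :
    D n = (hessenberg (fun j => 1 / ((2 * j + 3)! : ℚ)) n).det := by
  cases n with
  | zero => simp [D]
  | succ n => rfl

def sinSqrtDivSqrt : ℚ⟦X⟧ := PowerSeries.mk fun m => (-1) ^ m / (2 * m + 1)!

def sqrtDivSinSqrtCoeff (n : ℕ) : ℚ :=
  (-1) ^ (n + 1) * (2 ^ (2 * n) - 2) * bernoulli (2 * n) / (2 * n)!

theorem sinSqrtDivSqrt_eq_one_sub_X_mul :
    sinSqrtDivSqrt = 1 - X * PowerSeries.mk fun j => (-1) ^ j * (1 / ((2 * j + 3)! : ℚ)) := by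
  ext (_ | n)
  · simp [sinSqrtDivSqrt]
  · simp [sinSqrtDivSqrt, coeff_one, pow_succ, mul_add, div_eq_mul_inv]

theorem sinSqrtDivSqrt_mul_mk_D : sinSqrtDivSqrt * PowerSeries.mk (fun n => (D n : ℚ)) = 1 := by
  simp only [D_eq_det_hessenberg, sinSqrtDivSqrt_eq_one_sub_X_mul,
    one_sub_X_mul_mul_mk_det_hessenberg]

theorem sum_range_two_mul_eq_sum_odd {M : Type*} [AddCommMonoid M] {f : ℕ → M} {n : ℕ}
    (hf : ∀ k < n, f (2 * k) = 0) : ∑ i ∈ range (2 * n), f i = ∑ k ∈ range n, f (2 * k + 1) := by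
  induction n with
  | zero => simp
  | succ n ih =>
    rw [mul_add_one, sum_range_succ, sum_range_succ, sum_range_succ, hf n n.lt_succ_self, add_zero,
      ih fun k hk => hf k (by omega)]

theorem bernoulli_eval_half_of_odd {N : ℕ} (hN : Odd N) :
    (Polynomial.bernoulli N).eval (1 / 2 : ℚ) = 0 := by
  have h := Polynomial.bernoulli_eval_one_sub N (1 / 2)
  rw [hN.neg_one_pow, show (1 : ℚ) - 1 / 2 = 1 / 2 by norm_num] at h
  linarith

theorem sum_bernoulli_mul_choose_mul_two_pow_sub_two {N : ℕ} (hN : Odd N) (h1 : 1 < N) :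
    ∑ i ∈ range (N + 1), bernoulli (N - i) * N.choose i * (2 ^ (N - i) - 2) = 0 := by
  have eval_eq (x : ℚ) : (Polynomial.bernoulli N).eval x =
      ∑ i ∈ range (N + 1), bernoulli (N - i) * N.choose i * x ^ i := by
    simp [Polynomial.bernoulli_def, Polynomial.eval_finsetSum]
  have eval_one : (Polynomial.bernoulli N).eval 1 = 0 := by
    rw [Polynomial.bernoulli_eval_one, bernoulli'_eq_zero_of_odd hN h1]
  calc ∑ i ∈ range (N + 1), bernoulli (N - i) * N.choose i * (2 ^ (N - i) - 2)
      = 2 ^ N * (Polynomial.bernoulli N).eval (1 / 2) - 2 * (Polynomial.bernoulli N).eval 1 := by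
        rw [eval_eq, eval_eq, mul_sum, mul_sum, ← sum_sub_distrib]
        refine sum_congr rfl fun i hi => ?_
        have two_pow : (2 : ℚ) ^ N * (1 / 2) ^ i = 2 ^ (N - i) := by
          rw [← Nat.sub_add_cancel (Nat.lt_succ_iff.mp (mem_range.mp hi)), pow_add]
          field_simp
          simp
        rw [← two_pow]
        ring
    _ = 0 := by rw [bernoulli_eval_half_of_odd hN, eval_one]; ring

theorem sum_bernoulli_two_mul_mul_choose_two_mul_add_one {n : ℕ} (hn : n ≠ 0) :
    ∑ m ∈ range (n + 1), bernoulli (2 * (n - m)) * (2 * n + 1).choose (2 * m + 1) *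
      (2 ^ (2 * (n - m)) - 2) = 0 := by
  have h := sum_bernoulli_mul_choose_mul_two_pow_sub_two (odd_two_mul_add_one n) (by omega)
  rw [show 2 * n + 1 + 1 = 2 * (n + 1) by ring, sum_range_two_mul_eq_sum_odd] at h
  · rw [← h]
    refine sum_congr rfl fun m hm => ?_
    rw [show 2 * n + 1 - (2 * m + 1) = 2 * (n - m) by omega]
  · intro k hk
    obtain hkn | hkn := eq_or_ne k n
    · simp [hkn]
    · rw [bernoulli_eq_zero_of_odd ⟨n - k, by omega⟩ (by omega), zero_mul, zero_mul]

theorem sinSqrtDivSqrt_mul_mk_sqrtDivSinSqrtCoeff :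
    sinSqrtDivSqrt * PowerSeries.mk sqrtDivSinSqrtCoeff = 1 := by
  ext n
  rw [coeff_mul, Nat.sum_antidiagonal_eq_sum_range_succ_mk]
  simp only [sinSqrtDivSqrt, coeff_mk]
  have term : ∀ m ∈ range (n + 1), (-1) ^ m / ((2 * m + 1)! : ℚ) * sqrtDivSinSqrtCoeff (n - m) =
      (-1) ^ (n + 1) / (2 * n + 1)! *
        (bernoulli (2 * (n - m)) * (2 * n + 1).choose (2 * m + 1) * (2 ^ (2 * (n - m)) - 2)) := by
    intro m hm
    have hmn : m ≤ n := Nat.lt_succ_iff.mp (mem_range.mp hm)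
    have choose_eq :=
      Nat.choose_mul_factorial_mul_factorial (n := 2 * n + 1) (k := 2 * m + 1) (by omega)
    rw [show 2 * n + 1 - (2 * m + 1) = 2 * (n - m) by omega] at choose_eq
    have choose_ne_zero : ((2 * n + 1).choose (2 * m + 1) : ℚ) ≠ 0 := by
      exact_mod_cast (Nat.choose_pos (by omega)).ne'
    have sign : (-1 : ℚ) ^ m * (-1) ^ (n - m + 1) = (-1) ^ (n + 1) := by
      rw [← pow_add, show m + (n - m + 1) = n + 1 by omega]
    rw [sqrtDivSinSqrtCoeff, ← sign, ← choose_eq]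
    push_cast
    field_simp
  rw [sum_congr rfl term, ← mul_sum]
  rcases n with _ | n
  · norm_num
  · rw [sum_bernoulli_two_mul_mul_choose_two_mul_add_one n.succ_ne_zero, mul_zero, coeff_one,
      if_neg n.succ_ne_zero]

theorem D_eq_sqrtDivSinSqrtCoeff (n : ℕ) : D n = sqrtDivSinSqrtCoeff n := by
  have h := left_inv_eq_right_inv (mul_comm sinSqrtDivSqrt _ ▸ sinSqrtDivSqrt_mul_mk_D)
    sinSqrtDivSqrt_mul_mk_sqrtDivSinSqrtCoeff
  simpa using congrArg (coeff n) h

open Real in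
theorem hasSum_neg_one_pow_div_pow {p : ℕ} (hp : p ≠ 0) :
    HasSum (fun k : ℕ => (-1 : ℝ) ^ ((k + 1) + 1) / ((k : ℝ) + 1) ^ (2 * p))
      (-((-1) ^ (p + 1) * (2 * π) ^ (2 * p) / 2 / (2 * p)! *
        ((2 / 2 ^ (2 * p) - 1) * bernoulli (2 * p)))) := by
  have h := hasSum_one_div_nat_pow_mul_cos hp (x := 2⁻¹) ⟨by norm_num, by norm_num⟩
  rw [show (Polynomial.map (algebraMap ℚ ℝ) (Polynomial.bernoulli (2 * p))).eval 2⁻¹ =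
    bernoulliFun (2 * p) 2⁻¹ from rfl, bernoulliFun_eval_half] at h
  have cos_eq (n : ℕ) : cos (2 * π * n * 2⁻¹) = (-1) ^ n := by
    rw [show 2 * π * n * 2⁻¹ = n * π by ring, cos_nat_mul_pi]
  simp only [cos_eq] at h
  have shifted := ((hasSum_nat_add_iff' 1).mpr h).neg
  rw [sum_range_one, Nat.cast_zero, zero_pow (by omega), div_zero, zero_mul, sub_zero] at shifted
  have term (k : ℕ) : (-1 : ℝ) ^ ((k + 1) + 1) / ((k : ℝ) + 1) ^ (2 * p) =
      -(1 / ((k + 1 : ℕ) : ℝ) ^ (2 * p) * (-1) ^ (k + 1)) := by push_cast; ring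
  rw [funext term]
  exact shifted

theorem det_eq_alternating_sum (p : ℕ) (hp : 1 ≤ p) :
    ∃ S : ℝ,
      HasSum (fun k : ℕ => (-1 : ℝ) ^ ((k + 1) + 1) / ((k : ℝ) + 1) ^ (2 * p)) S ∧
        (D p : ℝ) = 2 / Real.pi ^ (2 * p) * S := by
  refine ⟨_, hasSum_neg_one_pow_div_pow (by omega), ?_⟩
  rw [D_eq_sqrtDivSinSqrtCoeff, sqrtDivSinSqrtCoeff]
  push_cast
  field_simp
  ring
end
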